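/- Every regular thread can be produced by a program over the reduced instruction set {+/a, /#k, #k\, !} (positive forward tests, forward and backward jumps, and termination only), using the encodings S ↦ !;/#1;#1\ and D ↦ /#1;/#1;#1\. -/

import Mathlib

/-- Basic Thread Algebra: freely generated by `S`, `D` and postconditional
composition `pcc P a Q` (i.e. `P ⊴ a ⊵ Q`). -/
inductive BTA (A : Type) : Type
  | S : BTA A
  | D : BTA A
  | pcc : BTA A → A → BTA A → BTA A

namespace BTA

variable {A : Type}

/-- The approximation operator `π`. -/
def pi : ℕ → BTA A → BTA A
  | 0, _ => D
  | _+1, S => S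
  | _+1, D => D
  | n+1, pcc P a Q => pcc (pi n P) a (pi n Q)

end BTA
theorem BTA.pi_pi {A : Type} : ∀ (n : ℕ) (P : BTA A),
    BTA.pi n (BTA.pi (n+1) P) = BTA.pi n P := by
  intro n
  induction n with
  | zero => intro P; rfl
  | succ n ih => intro P; cases P <;> simp [BTA.pi, ih]

/-- `BTA^∞`: the completion of BTA, given by projective sequences. -/
def BTAinf (A : Type) : Type := {f : ℕ → BTA A // ∀ n, BTA.pi n (f (n+1)) = f n}

/-- The thread `S` in `BTA^∞`. -/
def Sinf (A : Type) : BTAinf A :=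
  ⟨fun n => match n with | 0 => BTA.D | _+1 => BTA.S, by intro n; cases n <;> rfl⟩

/-- The thread `D` in `BTA^∞`. -/
def Dinf (A : Type) : BTAinf A := ⟨fun _ => BTA.D, by intro n; cases n <;> rfl⟩

/-- Postconditional composition `x ⊴ a ⊵ y` on `BTA^∞`. -/
def pccInf {A : Type} (a : A) (x y : BTAinf A) : BTAinf A :=
  ⟨fun n => match n with
    | 0 => BTA.D
    | n+1 => BTA.pcc (x.1 n) a (y.1 n),
   by intro n
      cases n with
      | zero => rfl
      | succ n =>
          show BTA.pi (n+1) (BTA.pcc (x.1 (n+1)) a (y.1 (n+1))) = _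
          simp [BTA.pi, x.2 n, y.2 n]⟩

/-- The right-hand sides of a finite linear recursive specification with
index set `Fin n`: each is `S`, `D`, or `x_j ⊴ a ⊵ x_k`. -/
inductive LinTerm (A : Type) (n : ℕ) : Type
  | S : LinTerm A n
  | D : LinTerm A n
  | pcc (j : Fin n) (a : A) (k : Fin n) : LinTerm A n

/-- `P` is a solution of the finite linear recursive specification `t`. -/
def IsSolution {A : Type} {n : ℕ} (t : Fin n → LinTerm A n)
    (P : Fin n → BTAinf A) : Prop :=
  ∀ i : Fin n,
    match t i with
    | LinTerm.S => P i = Sinf A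
    | LinTerm.D => P i = Dinf A
    | LinTerm.pcc j a k => P i = pccInf a (P j) (P k)
/-- The instructions of the semigroup `C`: forward and backward basic,
positive test, negative test and jump instructions, termination `!`
and abort `#`. -/
inductive Instr (A : Type) : Type
  | fbasic (a : A)      -- /a
  | fptest (a : A)      -- +/a
  | fntest (a : A)      -- -/a
  | fjump (k : ℕ+)      -- /#k
  | bbasic (a : A)      -- a\
  | bptest (a : A)      -- +a\
  | bntest (a : A)      -- -a\
  | bjump (k : ℕ+)      -- #k\
  | halt                -- !
  | abort               -- #

/-- The instruction at (1-based) position `j` of the `C`-expression `X`. -/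
def instAt {A : Type} (X : List (Instr A)) (j : ℤ) : Option (Instr A) :=
  if 1 ≤ j ∧ j ≤ (X.length : ℤ) then X[(j-1).toNat]? else none

/-- `T` satisfies the thread-extraction equations for the `C`-expression `X`
(Table 1 of the paper, together with `⌊X⌋_j = D` for out-of-range `j`). -/
def ExtrEqns {A : Type} (X : List (Instr A)) (T : ℤ → BTAinf A) : Prop :=
  ∀ j : ℤ,
    match instAt X j with
    | none => T j = Dinf A
    | some (Instr.fbasic a) => T j = pccInf a (T (j+1)) (T (j+1))
    | some (Instr.fptest a) => T j = pccInf a (T (j+1)) (T (j+2))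
    | some (Instr.fntest a) => T j = pccInf a (T (j+2)) (T (j+1))
    | some (Instr.fjump k) => T j = T (j + ((k : ℕ) : ℤ))
    | some (Instr.bbasic a) => T j = pccInf a (T (j-1)) (T (j-1))
    | some (Instr.bptest a) => T j = pccInf a (T (j-1)) (T (j-2))
    | some (Instr.bntest a) => T j = pccInf a (T (j-2)) (T (j-1))
    | some (Instr.bjump k) => T j = T (j - ((k : ℕ) : ℤ))
    | some Instr.halt => T j = Sinf A
    | some Instr.abort => T j = Dinf A

/-- Position `j` holds a jump instruction of `X` whose target is `j'`. -/
def JumpsTo {A : Type} (X : List (Instr A)) (j j' : ℤ) : Prop :=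
  (∃ k : ℕ+, instAt X j = some (Instr.fjump k) ∧ j' = j + ((k : ℕ) : ℤ)) ∨
  (∃ k : ℕ+, instAt X j = some (Instr.bjump k) ∧ j' = j - ((k : ℕ) : ℤ))

/-- From position `j` the equations yield a loop of consecutive jumps
without any actions. -/
def InJumpLoop {A : Type} (X : List (Instr A)) (j : ℤ) : Prop :=
  ∃ f : ℕ → ℤ, f 0 = j ∧ ∀ n, JumpsTo X (f n) (f (n+1))

/-- The rule that a loop of jumps without any actions extracts to `D`. -/
def LoopRule {A : Type} (X : List (Instr A)) (T : ℤ → BTAinf A) : Prop :=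
  ∀ j : ℤ, InJumpLoop X j → T j = Dinf A

/-- One step of control from position `j` to position `j'` in `X`. -/
def Succ {A : Type} (X : List (Instr A)) (j j' : ℤ) : Prop :=
  match instAt X j with
  | some (Instr.fbasic _) => j' = j + 1
  | some (Instr.fptest _) => j' = j + 1 ∨ j' = j + 2
  | some (Instr.fntest _) => j' = j + 1 ∨ j' = j + 2
  | some (Instr.fjump k) => j' = j + ((k : ℕ) : ℤ)
  | some (Instr.bbasic _) => j' = j - 1
  | some (Instr.bptest _) => j' = j - 1 ∨ j' = j - 2
  | some (Instr.bntest _) => j' = j - 1 ∨ j' = j - 2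
  | some (Instr.bjump k) => j' = j - ((k : ℕ) : ℤ)
  | _ => False

/-- A `C`-program: a nonempty instruction sequence in which control,
started anywhere inside the sequence, never reaches a position outside it. -/
def CProgram {A : Type} (X : List (Instr A)) : Prop :=
  X ≠ [] ∧
  ∀ j j' : ℤ, 1 ≤ j → j ≤ (X.length : ℤ) →
    Relation.ReflTransGen (Succ X) j j' → 1 ≤ j' ∧ j' ≤ (X.length : ℤ)

/-- Membership in the reduced instruction set `{+/a, /#k, #k\, !}`:
positive forward tests, forward and backward jumps, and termination only. -/
def InReducedSet' {A : Type} (ins : Instr A) : Prop :=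
  match ins with
  | Instr.fptest _ => True
  | Instr.fjump _ => True
  | Instr.bjump _ => True
  | Instr.halt => True
  | _ => False

/-!
Lay out the specification as one block of three instructions per variable `x_v`, starting at
position `3v+1`: `S ↦ !;/#1;#1\`, `D ↦ /#1;/#1;#1\`, and `x_j ⊴ a ⊵ x_k ↦ +/a` followed by jumps
to the blocks of `x_j` and `x_k`. Extracting `P v` at the start of each block, and at a jump the
thread at its target (`D` inside the `S` and `D` blocks), solves the extraction equations. The only
jump-only loops run inside `D` blocks and the padding of `S` blocks, where the thread is `D`. A
permutation of the variables puts `x_i` first, so that its block starts at position `1`.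
-/

section

variable {A : Type} {n : ℕ}

section ReducedPrograms

variable {X : List (Instr A)} {T : ℤ → BTAinf A} {j j' : ℤ}

lemma instAt_eq_none_iff : instAt X j = none ↔ ¬(1 ≤ j ∧ j ≤ X.length) := by
  unfold instAt
  split_ifs with h
  · rw [List.getElem?_eq_none_iff]
    omega
  · simp [h]

lemma JumpsTo.mem_range (h : JumpsTo X j j') : 1 ≤ j ∧ j ≤ X.length := by
  by_contra hj
  rcases h with ⟨k, hk, -⟩ | ⟨k, hk, -⟩ <;> simp [instAt_eq_none_iff.2 hj] at hk

lemma JumpsTo.unique {j₁ j₂ : ℤ} (h₁ : JumpsTo X j j₁) (h₂ : JumpsTo X j j₂) : j₁ = j₂ := by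
  rcases h₁ with ⟨k₁, h₁, rfl⟩ | ⟨k₁, h₁, rfl⟩ <;> rcases h₂ with ⟨k₂, h₂, rfl⟩ | ⟨k₂, h₂, rfl⟩ <;>
    simp_all

lemma JumpsTo.instAt_ne_halt (h : JumpsTo X j j') : instAt X j ≠ some .halt := by
  rcases h with ⟨k, hk, -⟩ | ⟨k, hk, -⟩ <;> simp [hk]

lemma JumpsTo.instAt_ne_fptest (h : JumpsTo X j j') (a : A) : instAt X j ≠ some (.fptest a) := by
  rcases h with ⟨k, hk, -⟩ | ⟨k, hk, -⟩ <;> simp [hk]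

lemma JumpsTo.succ_iff (h : JumpsTo X j j') {j'' : ℤ} : Succ X j j'' ↔ j'' = j' := by
  rcases h with ⟨k, hk, rfl⟩ | ⟨k, hk, rfl⟩ <;> simp [Succ, hk]

/-- The last clause (a jump may lead to another jump only from a position extracting to `D`)
is what makes the loop rule hold. -/
def ReducedAt (X : List (Instr A)) (T : ℤ → BTAinf A) (j : ℤ) : Prop :=
  (instAt X j = some .halt ∧ T j = Sinf A) ∨
  (∃ a, instAt X j = some (.fptest a) ∧ j + 2 ≤ X.length ∧
    T j = pccInf a (T (j + 1)) (T (j + 2))) ∨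
  ∃ j', JumpsTo X j j' ∧ 1 ≤ j' ∧ j' ≤ X.length ∧ T j = T j' ∧
    ∀ j'', JumpsTo X j' j'' → T j = Dinf A

lemma ReducedAt.of_jumpsTo_of_eq_Dinf (hJ : JumpsTo X j j') (h₁ : 1 ≤ j') (h₂ : j' ≤ X.length)
    (hj : T j = Dinf A) (hj' : T j' = Dinf A) : ReducedAt X T j :=
  .inr <| .inr ⟨j', hJ, h₁, h₂, hj.trans hj'.symm, fun _ _ => hj⟩

variable (hX : ∀ j : ℤ, 1 ≤ j → j ≤ X.length → ReducedAt X T j)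
include hX

lemma cProgram_of_reducedAt (hne : X ≠ []) : CProgram X := by
  refine ⟨hne, fun j j' h₁ h₂ hreach => ?_⟩
  induction hreach with
  | refl => exact ⟨h₁, h₂⟩
  | tail _ hstep ih =>
    rcases hX _ ih.1 ih.2 with ⟨hins, -⟩ | ⟨a, hins, hlen, -⟩ | ⟨j', hJ, h₁', h₂', -⟩
    · simp [Succ, hins] at hstep
    · simp only [Succ, hins] at hstep
      omega
    · rw [hJ.succ_iff] at hstep
      exact hstep ▸ ⟨h₁', h₂'⟩

lemma mem_reducedSet_of_reducedAt : ∀ ins ∈ X, InReducedSet' ins := by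
  intro ins hmem
  obtain ⟨p, hp, rfl⟩ := List.mem_iff_getElem.1 hmem
  have hins : instAt X (p + 1) = some X[p] := by
    simp [instAt, hp]
  have hget : ∀ {ins}, instAt X (p + 1) = some ins → X[p] = ins :=
    fun h => Option.some.inj (hins.symm.trans h)
  rcases hX (p + 1) (by omega) (by omega) with
    ⟨h, -⟩ | ⟨a, h, -⟩ | ⟨j', ⟨k, h, -⟩ | ⟨k, h, -⟩, -⟩ <;> rw [hget h] <;> trivial

lemma extrEqns_of_reducedAt (hout : ∀ j, instAt X j = none → T j = Dinf A) :
    ExtrEqns X T := by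
  intro j
  by_cases hj : 1 ≤ j ∧ j ≤ X.length
  · rcases hX j hj.1 hj.2 with ⟨hins, hT⟩ | ⟨a, hins, -, hT⟩ | ⟨j', hJ, -, -, hT, -⟩
    · rw [hins]; exact hT
    · rw [hins]; exact hT
    · rcases hJ with ⟨k, hins, rfl⟩ | ⟨k, hins, rfl⟩ <;> rw [hins] <;> exact hT
  · have hins := instAt_eq_none_iff.2 hj
    rw [hins]
    exact hout j hins

lemma loopRule_of_reducedAt : LoopRule X T := by
  rintro _ ⟨f, rfl, hf⟩
  have hJ := hf 0
  rcases hX _ hJ.mem_range.1 hJ.mem_range.2 with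
    ⟨hins, -⟩ | ⟨a, hins, -⟩ | ⟨j', hJ', -, -, -, hloop⟩
  · exact absurd hins hJ.instAt_ne_halt
  · exact absurd hins (hJ.instAt_ne_fptest a)
  · exact hloop _ (hJ'.unique hJ ▸ hf 1)

end ReducedPrograms

section Layout

variable {α : Type}

-- `instAt X = atPos X` holds by definition.
def atPos (l : List α) (j : ℤ) : Option α :=
  if 1 ≤ j ∧ j ≤ l.length then l[(j - 1).toNat]? else none

/-- Three entries per index `v : Fin n`, at the positions `3v+1, 3v+2, 3v+3`. -/
def layout (f : Fin n → ℕ → α) : List α :=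
  List.ofFn fun p : Fin (3 * n) => f ⟨p / 3, by omega⟩ (p % 3)

@[simp]
lemma length_layout (f : Fin n → ℕ → α) : (layout f).length = 3 * n :=
  List.length_ofFn

lemma atPos_layout (f : Fin n → ℕ → α) (v : Fin n) {r : ℕ} (hr : r < 3) :
    atPos (layout f) (3 * (v : ℕ) + r + 1) = some (f v r) := by
  have hv := v.isLt
  rw [atPos, if_pos (by simp; omega),
    show (3 * (v : ℕ) + r + 1 - 1 : ℤ).toNat = 3 * v + r by omega, layout, List.getElem?_ofFn,
    dif_pos (by omega)]
  congr 2
  · ext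
    show (3 * (v : ℕ) + r) / 3 = v
    omega
  · show (3 * (v : ℕ) + r) % 3 = r
    omega

lemma atPos_layout_eq_none_iff (f : Fin n → ℕ → α) {j : ℤ} :
    atPos (layout f) j = none ↔ ¬(1 ≤ j ∧ j ≤ 3 * n) := by
  unfold atPos
  split_ifs with h
  · rw [List.getElem?_eq_none_iff]
    simp only [length_layout] at h ⊢
    omega
  · simp_all

end Layout

def blockEntry (v : Fin n) : ℤ := 3 * (v : ℕ) + 1

def Instr.jump (d : ℤ) (hd : d ≠ 0) : Instr A :=
  if h : 0 < d then .fjump ⟨d.toNat, by omega⟩ else .bjump ⟨(-d).toNat, by omega⟩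

lemma jumpsTo_of_instAt_eq_jump {X : List (Instr A)} {j j' : ℤ} {hd : j' - j ≠ 0}
    (h : instAt X j = some (.jump (j' - j) hd)) : JumpsTo X j j' := by
  unfold Instr.jump at h
  split_ifs at h
  · exact .inl ⟨_, h, by simp; omega⟩
  · exact .inr ⟨_, h, by simp; omega⟩

namespace LinTerm

def encode (v : Fin n) : LinTerm A n → ℕ → Instr A
  | .S, 0 => .halt
  | .S, 1 => .fjump 1
  | .S, _ => .bjump 1
  | .D, 0 => .fjump 1
  | .D, 1 => .fjump 1
  | .D, _ => .bjump 1
  | .pcc _ a _, 0 => .fptest a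
  | .pcc j _ _, 1 => .jump (blockEntry j - (blockEntry v + 1)) (by unfold blockEntry; omega)
  | .pcc _ _ k, _ => .jump (blockEntry k - (blockEntry v + 2)) (by unfold blockEntry; omega)

def blockThread (P : Fin n → BTAinf A) (v : Fin n) : LinTerm A n → ℕ → BTAinf A
  | _, 0 => P v
  | .pcc j _ _, 1 => P j
  | .pcc _ _ k, 2 => P k
  | _, _ => Dinf A

def rename (f : Fin n → Fin n) : LinTerm A n → LinTerm A n
  | .S => .S
  | .D => .D
  | .pcc j a k => .pcc (f j) a (f k)

end LinTerm

lemma IsSolution.perm {t : Fin n → LinTerm A n} {P : Fin n → BTAinf A} (hP : IsSolution t P)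
    (σ : Equiv.Perm (Fin n)) : IsSolution (fun v => (t (σ v)).rename σ.symm) (P ∘ σ) := by
  intro v
  have hv := hP (σ v)
  cases ht : t (σ v) <;> simp_all [LinTerm.rename]

section Construction

variable (t : Fin n → LinTerm A n) (P : Fin n → BTAinf A)

def specProgram : List (Instr A) := layout fun v => (t v).encode v

def specThread (j : ℤ) : BTAinf A :=
  (atPos (layout fun v => (t v).blockThread P v) j).getD (Dinf A)

@[simp]
lemma length_specProgram : (specProgram t).length = 3 * n := length_layout _

variable (v : Fin n)

lemma instAt_specProgram {r : ℕ} (hr : r < 3) :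
    instAt (specProgram t) (blockEntry v + r) = some ((t v).encode v r) := by
  rw [show blockEntry v + r = 3 * (v : ℕ) + r + 1 by unfold blockEntry; ring]
  exact atPos_layout _ v hr

lemma specThread_blockEntry_add {r : ℕ} (hr : r < 3) :
    specThread t P (blockEntry v + r) = (t v).blockThread P v r := by
  rw [specThread, show blockEntry v + r = 3 * (v : ℕ) + r + 1 by unfold blockEntry; ring,
    atPos_layout _ v hr, Option.getD_some]

lemma instAt_specProgram_blockEntry :
    instAt (specProgram t) (blockEntry v) = some ((t v).encode v 0) := by
  simpa using instAt_specProgram t v (r := 0) (by norm_num)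

lemma specThread_blockEntry : specThread t P (blockEntry v) = P v := by
  simpa [LinTerm.blockThread] using specThread_blockEntry_add t P v (r := 0) (by norm_num)

lemma specThread_of_instAt_eq_none {j : ℤ} (h : instAt (specProgram t) j = none) :
    specThread t P j = Dinf A := by
  rw [specThread, (atPos_layout_eq_none_iff _).2, Option.getD_none]
  exact (atPos_layout_eq_none_iff _).1 h

end Construction

section Correctness

variable {t : Fin n → LinTerm A n} {P : Fin n → BTAinf A} (hP : IsSolution t P) (v : Fin n)
include hP

lemma IsSolution.eq_Dinf_of_jumpsTo_blockEntry {j : ℤ}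
    (h : JumpsTo (specProgram t) (blockEntry v) j) : P v = Dinf A := by
  have hins := instAt_specProgram_blockEntry t v
  have hv := hP v
  rcases ht : t v with _ | _ | ⟨_, a, _⟩ <;> rw [ht] at hins hv
  · exact absurd hins h.instAt_ne_halt
  · exact hv
  · exact absurd hins (h.instAt_ne_fptest a)

lemma reducedAt_blockEntry : ReducedAt (specProgram t) (specThread t P) (blockEntry v) := by
  have hins := instAt_specProgram_blockEntry t v
  have hT₀ := specThread_blockEntry t P v
  have hT₁ := specThread_blockEntry_add t P v (r := 1) (by norm_num)
  have hT₂ := specThread_blockEntry_add t P v (r := 2) (by norm_num)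
  have hlen : blockEntry v + 2 ≤ (specProgram t).length := by
    simp only [length_specProgram, blockEntry]; omega
  have hv := hP v
  push_cast at hT₁ hT₂
  rcases ht : t v with _ | _ | ⟨_, a, _⟩ <;>
    rw [ht] at hins hv hT₁ hT₂ <;> simp only [LinTerm.encode, LinTerm.blockThread] at hins hT₁ hT₂
  · exact .inl ⟨hins, hT₀.trans hv⟩
  · exact .of_jumpsTo_of_eq_Dinf (.inl ⟨1, hins, by simp⟩) (by unfold blockEntry; omega)
      (by omega) (hT₀.trans hv) hT₁
  · exact .inr <| .inl ⟨a, hins, hlen, by rw [hT₀, hv, hT₁, hT₂]⟩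

lemma reducedAt_blockEntry_add_one :
    ReducedAt (specProgram t) (specThread t P) (blockEntry v + 1) := by
  have hins := instAt_specProgram t v (r := 1) (by norm_num)
  have hT₁ := specThread_blockEntry_add t P v (r := 1) (by norm_num)
  have hT₂ := specThread_blockEntry_add t P v (r := 2) (by norm_num)
  have hlen : blockEntry v + 2 ≤ (specProgram t).length := by
    simp only [length_specProgram, blockEntry]; omega
  push_cast at hins hT₁ hT₂
  rcases ht : t v with _ | _ | ⟨j, _, _⟩ <;>
    rw [ht] at hins hT₁ hT₂ <;> simp only [LinTerm.encode, LinTerm.blockThread] at hins hT₁ hT₂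
  case S | D =>
    exact .of_jumpsTo_of_eq_Dinf (.inl ⟨1, hins, by simp; ring⟩) (by unfold blockEntry; omega)
      hlen hT₁ hT₂
  case pcc =>
    refine .inr <| .inr ⟨blockEntry j, jumpsTo_of_instAt_eq_jump hins,
      by unfold blockEntry; omega, by simp only [length_specProgram, blockEntry]; omega,
      hT₁.trans (specThread_blockEntry t P j).symm, fun _ h => hT₁.trans ?_⟩
    exact hP.eq_Dinf_of_jumpsTo_blockEntry j h

lemma reducedAt_blockEntry_add_two :
    ReducedAt (specProgram t) (specThread t P) (blockEntry v + 2) := by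
  have hins := instAt_specProgram t v (r := 2) (by norm_num)
  have hT₁ := specThread_blockEntry_add t P v (r := 1) (by norm_num)
  have hT₂ := specThread_blockEntry_add t P v (r := 2) (by norm_num)
  push_cast at hins hT₁ hT₂
  rcases ht : t v with _ | _ | ⟨_, _, k⟩ <;>
    rw [ht] at hins hT₁ hT₂ <;> simp only [LinTerm.encode, LinTerm.blockThread] at hins hT₁ hT₂
  case S | D =>
    exact .of_jumpsTo_of_eq_Dinf (.inr ⟨1, hins, by simp; ring⟩) (by unfold blockEntry; omega)
      (by simp only [length_specProgram, blockEntry]; omega) hT₂ hT₁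
  case pcc =>
    refine .inr <| .inr ⟨blockEntry k, jumpsTo_of_instAt_eq_jump hins,
      by unfold blockEntry; omega, by simp only [length_specProgram, blockEntry]; omega,
      hT₂.trans (specThread_blockEntry t P k).symm, fun _ h => hT₂.trans ?_⟩
    exact hP.eq_Dinf_of_jumpsTo_blockEntry k h

lemma reducedAt_specProgram (j : ℤ) (h₁ : 1 ≤ j) (h₂ : j ≤ (specProgram t).length) :
    ReducedAt (specProgram t) (specThread t P) j := by
  rw [length_specProgram] at h₂
  obtain ⟨v, rfl | rfl | rfl⟩ : ∃ v : Fin n, j = blockEntry v ∨ j = blockEntry v + 1 ∨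
      j = blockEntry v + 2 :=
    ⟨⟨((j - 1) / 3).toNat, by omega⟩, by simp only [blockEntry]; omega⟩
  exacts [reducedAt_blockEntry hP v, reducedAt_blockEntry_add_one hP v,
    reducedAt_blockEntry_add_two hP v]

end Correctness

end

/-- Every regular thread (a component `P i` of the solution of a finite
linear recursive specification) can be produced by a `C`-program over the
reduced instruction set `{+/a, /#k, #k\, !}` (e.g. using the encodings
`S ↦ !;/#1;#1\` and `D ↦ /#1;/#1;#1\`). -/
theorem regular_thread_produced_by_reduced_program {A : Type} {n : ℕ}
    (t : Fin n → LinTerm A n) (P : Fin n → BTAinf A)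
    (hP : IsSolution t P) (i : Fin n) :
    ∃ X : List (Instr A), CProgram X ∧ (∀ ins ∈ X, InReducedSet' ins) ∧
      ∃ T : ℤ → BTAinf A, ExtrEqns X T ∧ LoopRule X T ∧ T 1 = P i := by
  let σ := Equiv.swap ⟨0, i.pos⟩ i
  let t' := fun v => (t (σ v)).rename σ.symm
  have hP' := reducedAt_specProgram (hP.perm σ)
  refine ⟨specProgram t', cProgram_of_reducedAt hP' (List.ne_nil_of_length_pos ?_),
    mem_reducedSet_of_reducedAt hP', specThread t' (P ∘ σ),
    extrEqns_of_reducedAt hP' fun _ => specThread_of_instAt_eq_none _ _,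
    loopRule_of_reducedAt hP', ?_⟩
  · simp [i.pos]
  · simpa [blockEntry, σ] using specThread_blockEntry t' (P ∘ σ) ⟨0, i.pos⟩
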